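/- Let (Ω, μ) be a probability measure space and suppose an essentially bounded measurable function f satisfies: for every measurable B ⊆ Ω with μ(B) ≤ b, ess sup_Ω |f| ≤ R · ess sup_{Ω∖B} |f|. Then for all 0 < q < p ≤ ∞, setting β = 1/q − 1/p, one has ‖f‖_{L_p(Ω)} ≤ R^{qβ} b^{−β} ‖f‖_{L_q(Ω)}. -/

import Mathlib

/-!
If `‖f‖_∞ > R c`, the Remez inequality applied to `B = {|f| > c}` shows `μ B > b`, so by
Chebyshev `‖f‖_q ≥ c b^{1/q}`; hence `‖f‖_∞ ≤ R b^{-1/q} ‖f‖_q`. Interpolating through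
`‖f‖_p^p ≤ ‖f‖_∞^{p-q} ‖f‖_q^q` turns this into the claim, with `qβ = 1 - q/p`.
-/

open MeasureTheory
open scoped ENNReal

theorem ENNReal.toReal_div_toReal_le_one {p q : ℝ≥0∞} (hqp : q ≤ p) :
    q.toReal / p.toReal ≤ 1 := by
  rcases eq_or_ne p ⊤ with rfl | hp
  · simp
  exact div_le_one_of_le₀ (ENNReal.toReal_mono hp hqp) ENNReal.toReal_nonneg

namespace MeasureTheory

variable {α E : Type*} [MeasurableSpace α] [NormedAddCommGroup E] {μ : Measure α} {f : α → E}

def RemezInfty (μ : Measure α) (f : α → E) (b r : ℝ≥0∞) : Prop :=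
  ∀ B : Set α, MeasurableSet B → μ B ≤ b →
    eLpNorm f ⊤ μ ≤ r * eLpNorm f ⊤ (μ.restrict Bᶜ)

namespace RemezInfty

variable {b r : ℝ≥0∞}

theorem lt_measure_le_enorm (h : RemezInfty μ f b r) (hf : AEStronglyMeasurable f μ)
    {c : ℝ≥0∞} (hc : r * c < eLpNorm f ⊤ μ) : b < μ {x | c ≤ ‖f x‖ₑ} := by
  set A := {x | c < ‖hf.mk f x‖ₑ}
  have hA : MeasurableSet A :=
    measurableSet_lt measurable_const hf.stronglyMeasurable_mk.enorm
  have hA_le : A ≤ᵐ[μ] {x | c ≤ ‖f x‖ₑ} := by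
    filter_upwards [hf.ae_eq_mk] with x hx hxA
    exact (hx ▸ hxA : c < ‖f x‖ₑ).le
  have hAc : eLpNorm f ⊤ (μ.restrict Aᶜ) ≤ c := by
    rw [eLpNorm_congr_ae (ae_restrict_of_ae hf.ae_eq_mk), eLpNorm_exponent_top]
    exact eLpNormEssSup_le_of_ae_enorm_bound
      (ae_restrict_of_forall_mem hA.compl fun x hx => not_lt.mp hx)
  refine lt_of_lt_of_le ?_ (measure_mono_ae hA_le)
  by_contra! hAb
  exact (hc.trans_le ((h A hA hAb).trans (mul_le_mul_right hAc r))).false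

theorem mul_rpow_le_eLpNorm (h : RemezInfty μ f b r) (hf : AEStronglyMeasurable f μ)
    {q : ℝ≥0∞} (hq0 : q ≠ 0) (hq : q ≠ ⊤) {c : ℝ≥0∞} (hc : r * c < eLpNorm f ⊤ μ) :
    c * b ^ (1 / q.toReal) ≤ eLpNorm f q μ := by
  have hq_pos : 0 < q.toReal := ENNReal.toReal_pos hq0 hq
  have markov : c ^ q.toReal * b ≤ eLpNorm f q μ ^ q.toReal :=
    calc c ^ q.toReal * b ≤ c ^ q.toReal * μ {x | c ≤ ‖f x‖ₑ} := by
          gcongr; exact (h.lt_measure_le_enorm hf hc).le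
      _ ≤ eLpNorm f q μ ^ q.toReal := mul_meas_ge_le_pow_eLpNorm' μ hq0 hq hf c
  calc c * b ^ (1 / q.toReal) = (c ^ q.toReal * b) ^ (1 / q.toReal) := by
        rw [ENNReal.mul_rpow_of_nonneg _ _ (by positivity), ← ENNReal.rpow_mul,
          mul_one_div_cancel hq_pos.ne', ENNReal.rpow_one]
    _ ≤ (eLpNorm f q μ ^ q.toReal) ^ (1 / q.toReal) := by gcongr
    _ = eLpNorm f q μ := by
        rw [← ENNReal.rpow_mul, mul_one_div_cancel hq_pos.ne', ENNReal.rpow_one]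

theorem eLpNorm_top_le (h : RemezInfty μ f b r) (hf : AEStronglyMeasurable f μ)
    (hb0 : b ≠ 0) (hb : b ≠ ⊤) (hr0 : r ≠ 0) (hr : r ≠ ⊤)
    {q : ℝ≥0∞} (hq0 : q ≠ 0) (hq : q ≠ ⊤) :
    eLpNorm f ⊤ μ ≤ r * b ^ (-(1 / q.toReal)) * eLpNorm f q μ := by
  set s := b ^ (1 / q.toReal)
  have hs0 : s ≠ 0 := (ENNReal.rpow_pos (pos_iff_ne_zero.mpr hb0) hb).ne'
  have hs : s ≠ ⊤ := ENNReal.rpow_ne_top_of_nonneg (by positivity) hb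
  have key : eLpNorm f ⊤ μ / r ≤ eLpNorm f q μ / s := by
    refine le_of_forall_lt_imp_le_of_dense fun c hc => ?_
    rw [ENNReal.le_div_iff_mul_le (Or.inl hs0) (Or.inl hs)]
    refine h.mul_rpow_le_eLpNorm hf hq0 hq ?_
    rwa [mul_comm, ← ENNReal.lt_div_iff_mul_lt (Or.inl hr0) (Or.inl hr)]
  calc eLpNorm f ⊤ μ = r * (eLpNorm f ⊤ μ / r) := (ENNReal.mul_div_cancel hr0 hr).symm
    _ ≤ r * (eLpNorm f q μ / s) := by gcongr
    _ = r * b ^ (-(1 / q.toReal)) * eLpNorm f q μ := by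
        rw [ENNReal.rpow_neg, div_eq_mul_inv]; ring

end RemezInfty

/-- For `p = ∞` the exponents are `1` and `0`, since `(∞ : ℝ≥0∞).toReal = 0`. -/
theorem eLpNorm_le_eLpNorm_top_rpow_mul_eLpNorm_rpow (hf : AEStronglyMeasurable f μ)
    {p q : ℝ≥0∞} (hq0 : q ≠ 0) (hq : q ≠ ⊤) (hqp : q ≤ p) :
    eLpNorm f p μ ≤
      eLpNorm f ⊤ μ ^ (1 - q.toReal / p.toReal) * eLpNorm f q μ ^ (q.toReal / p.toReal) := by
  rcases eq_or_ne p ⊤ with rfl | hp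
  · simp
  have hq_pos : 0 < q.toReal := ENNReal.toReal_pos hq0 hq
  have hqp' : q.toReal ≤ p.toReal := ENNReal.toReal_mono hp hqp
  have hp_pos : 0 < p.toReal := hq_pos.trans_le hqp'
  set M := eLpNorm f ⊤ μ
  set N := eLpNorm f q μ
  have pointwise : ∀ᵐ x ∂μ, ‖f x‖ₑ ^ p.toReal ≤ M ^ (p.toReal - q.toReal) * ‖f x‖ₑ ^ q.toReal := by
    filter_upwards [ae_le_eLpNormEssSup (f := f) (μ := μ)] with x hx
    calc ‖f x‖ₑ ^ p.toReal = ‖f x‖ₑ ^ (p.toReal - q.toReal) * ‖f x‖ₑ ^ q.toReal := by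
          rw [← ENNReal.rpow_add_of_nonneg _ _ (sub_nonneg.mpr hqp') hq_pos.le, sub_add_cancel]
      _ ≤ M ^ (p.toReal - q.toReal) * ‖f x‖ₑ ^ q.toReal := by
          gcongr
          exact hx.trans_eq eLpNorm_exponent_top.symm
  have hN : ∫⁻ x, ‖f x‖ₑ ^ q.toReal ∂μ = N ^ q.toReal := by
    rw [show N = _ from eLpNorm_eq_lintegral_rpow_enorm_toReal hq0 hq, ← ENNReal.rpow_mul,
      one_div_mul_cancel hq_pos.ne', ENNReal.rpow_one]
  have hp0 : p ≠ 0 := (pos_iff_ne_zero.mpr hq0 |>.trans_le hqp).ne'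
  rw [eLpNorm_eq_lintegral_rpow_enorm_toReal hp0 hp]
  calc (∫⁻ x, ‖f x‖ₑ ^ p.toReal ∂μ) ^ (1 / p.toReal)
      ≤ (∫⁻ x, M ^ (p.toReal - q.toReal) * ‖f x‖ₑ ^ q.toReal ∂μ) ^ (1 / p.toReal) := by
        gcongr ?_ ^ _
        exact lintegral_mono_ae pointwise
    _ = (M ^ (p.toReal - q.toReal) * N ^ q.toReal) ^ (1 / p.toReal) := by
        rw [lintegral_const_mul'' _ (hf.enorm.pow_const _), hN]
    _ = M ^ (1 - q.toReal / p.toReal) * N ^ (q.toReal / p.toReal) := by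
        rw [ENNReal.mul_rpow_of_nonneg _ _ (by positivity), ← ENNReal.rpow_mul,
          ← ENNReal.rpow_mul]
        congr 2 <;> field_simp

theorem eLpNorm_le_rpow_mul_eLpNorm_of_eLpNorm_top_le (hf : AEStronglyMeasurable f μ)
    {p q K : ℝ≥0∞} (hq0 : q ≠ 0) (hq : q ≠ ⊤) (hqp : q ≤ p)
    (hK : eLpNorm f ⊤ μ ≤ K * eLpNorm f q μ) :
    eLpNorm f p μ ≤ K ^ (1 - q.toReal / p.toReal) * eLpNorm f q μ := by
  set θ := q.toReal / p.toReal
  have hθ0 : 0 ≤ θ := by positivity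
  have hθ1 : θ ≤ 1 := ENNReal.toReal_div_toReal_le_one hqp
  set N := eLpNorm f q μ
  calc eLpNorm f p μ ≤ eLpNorm f ⊤ μ ^ (1 - θ) * N ^ θ :=
        eLpNorm_le_eLpNorm_top_rpow_mul_eLpNorm_rpow hf hq0 hq hqp
    _ ≤ (K * N) ^ (1 - θ) * N ^ θ := by gcongr
    _ = K ^ (1 - θ) * N := by
        rw [ENNReal.mul_rpow_of_nonneg _ _ (by linarith), mul_assoc,
          ← ENNReal.rpow_add_of_nonneg _ _ (by linarith) hθ0, sub_add_cancel, ENNReal.rpow_one]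

end MeasureTheory

theorem remez_infty_implies_nikolskii_general_general
    {Ω : Type*} [MeasurableSpace Ω] (μ : Measure Ω)
    (f : Ω → ℝ) (b R : ℝ) (hb : 0 < b) (hR : 1 ≤ R)
    (hf : MemLp f ⊤ μ)
    (hRem : ∀ B : Set Ω, MeasurableSet B → μ B ≤ ENNReal.ofReal b →
      eLpNorm f ⊤ μ ≤ ENNReal.ofReal R * eLpNorm f ⊤ (μ.restrict Bᶜ)) :
    ∀ p q : ℝ≥0∞, 0 < q → q < p →
      eLpNorm f p μ ≤
        ENNReal.ofReal (R ^ (q.toReal * (1 / q.toReal - 1 / p.toReal)) *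
          b ^ (-(1 / q.toReal - 1 / p.toReal))) * eLpNorm f q μ := by
  intro p q hq0 hqp
  have hq : q ≠ ⊤ := (hqp.trans_le le_top).ne
  have hR0 : 0 < R := one_pos.trans_le hR
  have hRemez : RemezInfty μ f (ENNReal.ofReal b) (ENNReal.ofReal R) := hRem
  set β := 1 / q.toReal - 1 / p.toReal
  have hθ : 1 - q.toReal / p.toReal = q.toReal * β := by
    rw [mul_sub, mul_one_div_cancel (ENNReal.toReal_pos hq0.ne' hq).ne', mul_one_div]
  have hθ0 : 0 ≤ q.toReal * β := hθ ▸ sub_nonneg.mpr (ENNReal.toReal_div_toReal_le_one hqp.le)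
  have hconst : (ENNReal.ofReal R * ENNReal.ofReal b ^ (-(1 / q.toReal))) ^ (q.toReal * β) =
      ENNReal.ofReal (R ^ (q.toReal * β) * b ^ (-β)) := by
    rw [ENNReal.mul_rpow_of_nonneg _ _ hθ0, ← ENNReal.rpow_mul,
      ENNReal.ofReal_mul (by positivity), ENNReal.ofReal_rpow_of_pos hR0,
      ENNReal.ofReal_rpow_of_pos hb]
    field_simp [(ENNReal.toReal_pos hq0.ne' hq).ne']
  rw [← hconst, ← hθ]
  exact eLpNorm_le_rpow_mul_eLpNorm_of_eLpNorm_top_le hf.1 hq0.ne' hq hqp.le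
    (hRemez.eLpNorm_top_le hf.1 (by simpa using hb) ENNReal.ofReal_ne_top
      (by simpa using hR0) ENNReal.ofReal_ne_top hq0.ne' hq)

/-- the L_∞ Remez inequality with parameters b, R implies the
Nikolskii inequality ‖f‖_p ≤ R^{qβ} b^{-β} ‖f‖_q for all 0 < q < p ≤ ∞,
β = 1/q - 1/p. -/
theorem remez_infty_implies_nikolskii_general
    {Ω : Type*} [MeasurableSpace Ω] (μ : Measure Ω) [IsProbabilityMeasure μ]
    (f : Ω → ℝ) (b R : ℝ) (hb : 0 < b) (hb1 : b ≤ 1) (hR : 1 ≤ R)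
    (hf : MemLp f ⊤ μ)
    (hRem : ∀ B : Set Ω, MeasurableSet B → μ B ≤ ENNReal.ofReal b →
      eLpNorm f ⊤ μ ≤ ENNReal.ofReal R * eLpNorm f ⊤ (μ.restrict Bᶜ)) :
    ∀ p q : ℝ≥0∞, 0 < q → q < p →
      eLpNorm f p μ ≤
        ENNReal.ofReal (R ^ (q.toReal * (1 / q.toReal - 1 / p.toReal)) *
          b ^ (-(1 / q.toReal - 1 / p.toReal))) * eLpNorm f q μ :=
  remez_infty_implies_nikolskii_general_general μ f b R hb hR hf hRem
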